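/- arXiv:1612.06219 — 4 statements merged into one kernel-verified Lean document; each statement's English description precedes it below -/
import Mathlib

section
/- The Heine–Borel Covering Lemma for [0,1] follows from König's Infinity Lemma restricted to binary trees: given a sequence of open intervals covering [0,1] with no finite subcover, the dyadic subintervals not covered by the first n intervals form an infinite finitely branching tree, and a path through it yields a point of [0,1] not covered by any interval, a contradiction. -/
/-!
If no finite subfamily of the intervals `Iₙ` covers `[0,1]`, then for every `k` some dyadic
interval of length `2⁻ᵏ` is not covered by `I₀, …, I_{k-1}`, so the binary strings coding such
uncovered intervals form an infinite prefix-closed tree. König's lemma yields an infinite path;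
its nested dyadic intervals shrink to a point `x ∈ [0,1]`. Some `Iₙ` contains `x`, and being open it
contains the whole `k`-th interval of the path once `k > n` and `2⁻ᵏ` is small, contradicting that
this interval lies in the tree.
-/

open Set

/-- `dyadicLeft σ = ∑ i, σ(i) 2^{-i-1}`, in Horner form. -/
noncomputable def dyadicLeft : List Bool → ℝ
  | [] => 0
  | b :: σ => (cond b 1 0 + dyadicLeft σ) / 2

def dyadicInterval (σ : List Bool) : Set ℝ :=
  Icc (dyadicLeft σ) (dyadicLeft σ + 2⁻¹ ^ σ.length)

lemma dyadicInterval_nil : dyadicInterval [] = Icc 0 1 := by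
  simp [dyadicInterval, dyadicLeft]

lemma mem_dyadicInterval_cons {b : Bool} {σ : List Bool} {x : ℝ} :
    x ∈ dyadicInterval (b :: σ) ↔ 2 * x - cond b 1 0 ∈ dyadicInterval σ := by
  simp only [dyadicInterval, dyadicLeft, List.length_cons, pow_succ, mem_Icc]
  constructor <;> rintro ⟨h₁, h₂⟩ <;> constructor <;> linarith

lemma dyadicInterval_subset_Icc (σ : List Bool) : dyadicInterval σ ⊆ Icc 0 1 := by
  induction σ with
  | nil => rw [dyadicInterval_nil]
  | cons b σ ih =>
    intro x hx
    obtain ⟨h₀, h₁⟩ := ih (mem_dyadicInterval_cons.mp hx)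
    cases b <;> constructor <;> simp only [cond] at h₀ h₁ <;> linarith

lemma dyadicInterval_subset_of_prefix {τ σ : List Bool} (h : τ <+: σ) :
    dyadicInterval σ ⊆ dyadicInterval τ := by
  induction τ generalizing σ with
  | nil => rw [dyadicInterval_nil]; exact dyadicInterval_subset_Icc σ
  | cons b τ ih =>
    obtain ⟨σ, rfl⟩ : ∃ σ', σ = b :: σ' := by
      obtain ⟨ρ, rfl⟩ := h
      exact ⟨τ ++ ρ, rfl⟩
    intro x hx
    exact mem_dyadicInterval_cons.mpr
      (ih (List.cons_prefix_cons.mp h).2 (mem_dyadicInterval_cons.mp hx))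

lemma exists_length_eq_mem_dyadicInterval (k : ℕ) {x : ℝ} (hx : x ∈ Icc (0 : ℝ) 1) :
    ∃ σ : List Bool, σ.length = k ∧ x ∈ dyadicInterval σ := by
  induction k generalizing x with
  | zero => exact ⟨[], rfl, dyadicInterval_nil ▸ hx⟩
  | succ k ih =>
    obtain ⟨hx₀, hx₁⟩ := hx
    obtain ⟨b, hb⟩ : ∃ b : Bool, 2 * x - cond b 1 0 ∈ Icc (0 : ℝ) 1 := by
      rcases le_total x (1 / 2) with h | h
      · exact ⟨false, by constructor <;> simp only [cond] <;> linarith⟩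
      · exact ⟨true, by constructor <;> simp only [cond] <;> linarith⟩
    obtain ⟨σ, hσ, hxσ⟩ := ih hb
    exact ⟨b :: σ, by rw [List.length_cons, hσ], mem_dyadicInterval_cons.mpr hxσ⟩

lemma dyadicInterval_subset_closedBall {σ : List Bool} {x : ℝ} (hx : x ∈ dyadicInterval σ) :
    dyadicInterval σ ⊆ Metric.closedBall x (2⁻¹ ^ σ.length) := fun y hy => by
  simpa using Real.dist_le_of_mem_Icc hy hx

lemma List.ofFn_prefix_ofFn_of_le {α : Type*} (f : ℕ → α) {j k : ℕ} (h : j ≤ k) :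
    (List.ofFn fun i : Fin j => f i) <+: List.ofFn fun i : Fin k => f i := by
  rw [List.prefix_iff_eq_take]
  apply List.ext_getElem <;> simp [h]

lemma exists_forall_mem_dyadicInterval_ofFn (f : ℕ → Bool) :
    ∃ x, ∀ k, x ∈ dyadicInterval (List.ofFn fun i : Fin k => f i) := by
  have hanti : Antitone fun k => dyadicInterval (List.ofFn fun i : Fin k => f i) :=
    fun _ _ h => dyadicInterval_subset_of_prefix (List.ofFn_prefix_ofFn_of_le f h)
  exact ⟨_, mem_iInter.mp <| ciSup_mem_iInter_Icc_of_antitone_Icc hanti fun _ =>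
    le_add_of_nonneg_right (by positivity)⟩

def uncoveredTree (a b : ℕ → ℝ) : Set (List Bool) :=
  {σ | ¬ dyadicInterval σ ⊆ ⋃ i < σ.length, Ioo (a i) (b i)}

lemma uncoveredTree_prefix_closed {a b : ℕ → ℝ} {σ : List Bool} (hσ : σ ∈ uncoveredTree a b)
    {τ : List Bool} (h : τ <+: σ) : τ ∈ uncoveredTree a b := fun hτ =>
  hσ <| (dyadicInterval_subset_of_prefix h).trans <| hτ.trans <|
    biUnion_mono (fun _ hi => lt_of_lt_of_le hi h.length_le) fun _ _ => le_rfl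

lemma exists_length_eq_mem_uncoveredTree {a b : ℕ → ℝ}
    (hfin : ∀ F : Finset ℕ, ¬ Icc (0 : ℝ) 1 ⊆ ⋃ n ∈ F, Ioo (a n) (b n)) (k : ℕ) :
    ∃ σ ∈ uncoveredTree a b, σ.length = k := by
  obtain ⟨x, hx, hxF⟩ := not_subset.mp (hfin (Finset.range k))
  obtain ⟨σ, hσ, hxσ⟩ := exists_length_eq_mem_dyadicInterval k hx
  refine ⟨σ, fun hcov => hxF ?_, hσ⟩
  simpa [hσ] using hcov hxσ

lemma uncoveredTree_infinite {a b : ℕ → ℝ}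
    (hfin : ∀ F : Finset ℕ, ¬ Icc (0 : ℝ) 1 ⊆ ⋃ n ∈ F, Ioo (a n) (b n)) :
    (uncoveredTree a b).Infinite := by
  refine Infinite.of_image List.length ?_
  rw [eq_univ_of_forall (s := List.length '' _) (exists_length_eq_mem_uncoveredTree hfin)]
  exact infinite_univ

/-- The **Heine–Borel Covering Lemma** for `[0,1]` follows from **König's
Infinity Lemma restricted to binary trees**: assuming that every infinite
subtree of the full binary tree has an infinite path, every covering of
`[0,1]` by a sequence of open intervals has a finite subcovering. -/
theorem heine_borel_of_binary_koenig
    (kl : ∀ T : Set (List Bool),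
      (∀ σ ∈ T, ∀ τ : List Bool, τ <+: σ → τ ∈ T) → T.Infinite →
      ∃ f : ℕ → Bool, ∀ k : ℕ, (List.ofFn fun i : Fin k => f i) ∈ T) :
    ∀ a b : ℕ → ℝ, Set.Icc (0 : ℝ) 1 ⊆ ⋃ n : ℕ, Set.Ioo (a n) (b n) →
      ∃ F : Finset ℕ, Set.Icc (0 : ℝ) 1 ⊆ ⋃ n ∈ F, Set.Ioo (a n) (b n) := by
  intro a b hcov
  by_contra! hfin
  obtain ⟨f, hf⟩ := kl (uncoveredTree a b) (fun σ hσ τ h => uncoveredTree_prefix_closed hσ h)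
    (uncoveredTree_infinite hfin)
  obtain ⟨x, hx⟩ := exists_forall_mem_dyadicInterval_ofFn f
  have hx01 : x ∈ Icc (0 : ℝ) 1 := dyadicInterval_nil ▸ hx 0
  obtain ⟨n, hxn⟩ := mem_iUnion.mp (hcov hx01)
  obtain ⟨ε, hε, hball⟩ := Metric.isOpen_iff.mp isOpen_Ioo x hxn
  obtain ⟨k, hkε, hnk⟩ := ((tendsto_pow_atTop_nhds_zero_of_lt_one (by norm_num : (0 : ℝ) ≤ 2⁻¹)
    (by norm_num)).eventually (gt_mem_nhds hε)).and (Filter.eventually_gt_atTop n) |>.exists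
  refine hf k fun y hy => mem_iUnion₂.mpr ⟨n, by simpa using hnk, hball ?_⟩
  have hyx := dyadicInterval_subset_closedBall (hx k) hy
  rw [List.length_ofFn] at hyx
  exact Metric.closedBall_subset_ball hkε hyx
end

section
/- There exist two disjoint recursively enumerable subsets A and B of ℕ that are recursively inseparable: there is no recursive (computable) set C with A ⊆ C and B ∩ C = ∅. -/
/-!
Let `A` (resp. `B`) be the set of `n` such that the `n`-th partial computable function outputs `0`
(resp. `1`) on input `n`. If a computable `C` separated them, its characteristic function would
have an index `e`, and `φₑ(e) = χ_C(e)`: if `e ∈ C` then `e ∈ B ∩ C`, and if `e ∉ C` then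
`e ∈ A ⊆ C`.
-/

/-- `A ⊆ ℕ` is recursively enumerable: it is the domain of a partial
computable function. -/
def REset (A : Set ℕ) : Prop :=
  ∃ f : ℕ →. Unit, Partrec f ∧ ∀ n : ℕ, n ∈ A ↔ (f n).Dom

open Nat.Partrec (Code)
open Nat.Partrec.Code

theorem REset.of_rePred {p : ℕ → Prop} (hp : REPred p) : REset {n | p n} :=
  ⟨_, hp, fun _ => ⟨fun h => ⟨h, trivial⟩, fun ⟨h, _⟩ => h⟩⟩

theorem Partrec.mem_re {α : Type*} [Primcodable α] {f : α →. ℕ} (hf : Partrec f) (k : ℕ) :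
    REPred fun a => k ∈ f a := by
  have hk : REPred fun m : ℕ => m = k :=
    (Primrec.eq.comp Primrec.id (Primrec.const k)).computablePred.to_re
  refine (hf.bind (hk.comp Computable.snd).to₂).dom_re.of_eq fun a => ?_
  simp [Part.dom_iff_mem, Part.mem_bind_iff]

theorem exists_eval_ofNat_self_eq_some {g : ℕ → ℕ} (hg : Computable g) :
    ∃ n, eval (Denumerable.ofNat Code n) n = Part.some (g n) := by
  obtain ⟨c, hc⟩ := exists_code.1 (Partrec.nat_iff.1 hg.partrec)
  exact ⟨Encodable.encode c, by rw [Denumerable.ofNat_encode, hc]; rfl⟩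

def diagOutputSet (k : ℕ) : Set ℕ := {n | k ∈ eval (Denumerable.ofNat Code n) n}

theorem REset_diagOutputSet (k : ℕ) : REset (diagOutputSet k) :=
  .of_rePred <| (eval_part.comp ((Computable.ofNat Code).comp .id) .id).mem_re k

theorem disjoint_diagOutputSet {j k : ℕ} (h : j ≠ k) :
    Disjoint (diagOutputSet j) (diagOutputSet k) :=
  Set.disjoint_left.2 fun _ hj hk => h (Part.mem_unique hj hk)

/-- There exist two disjoint recursively enumerable subsets of `ℕ` that are
**recursively inseparable**: no recursive (computable) set `C` satisfies
`A ⊆ C` and `B ∩ C = ∅`. -/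
theorem exists_recursively_inseparable_re_sets :
    ∃ A B : Set ℕ, REset A ∧ REset B ∧ Disjoint A B ∧
      ¬ ∃ C : Set ℕ, ComputablePred (· ∈ C) ∧ A ⊆ C ∧ B ∩ C = ∅ := by
  refine ⟨diagOutputSet 0, diagOutputSet 1, REset_diagOutputSet 0, REset_diagOutputSet 1,
    disjoint_diagOutputSet zero_ne_one, ?_⟩
  rintro ⟨C, hC, hAC, hBC⟩
  classical
  obtain ⟨e, he⟩ := exists_eval_ofNat_self_eq_some
    (ComputablePred.ite (.const 1) (.const 0) hC)
  by_cases heC : e ∈ C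
  · have heB : e ∈ diagOutputSet 1 := by simp [diagOutputSet, he, heC]
    exact Set.eq_empty_iff_forall_notMem.1 hBC e ⟨heB, heC⟩
  · have heA : e ∈ diagOutputSet 0 := by simp [diagOutputSet, he, heC]
    exact heC (hAC heA)
end

section
/- Every nonempty Π⁰₁ class contains a member A with A ≤_T ∅' (the Kreisel Basis Theorem): the sets Turing reducible to the halting problem form a basis for nonempty Π⁰₁ classes. -/
/-! Relativized (oracle) computability, mirroring `Nat.Partrec.Code`. -/

/-- Codes for partial functions computable relative to an oracle. -/
inductive OCode : Type
  | zero : OCode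
  | succ : OCode
  | left : OCode
  | right : OCode
  | oracle : OCode
  | pair : OCode → OCode → OCode
  | comp : OCode → OCode → OCode
  | prec : OCode → OCode → OCode
  | rfind' : OCode → OCode

/-- A surjective enumeration of oracle codes, mirroring
`Nat.Partrec.Code.ofNatCode`. -/
def OCode.ofNat : ℕ → OCode
  | 0 => .zero
  | 1 => .succ
  | 2 => .left
  | 3 => .right
  | 4 => .oracle
  | n + 5 =>
    let m := n.div2.div2
    have hm : m < n + 5 := by
      have h1 : n.div2 ≤ n := by simp [Nat.div2_val]; omega
      have h2 : n.div2.div2 ≤ n.div2 := by simp [Nat.div2_val]; omega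
      omega
    have _m1 : m.unpair.1 < n + 5 := lt_of_le_of_lt m.unpair_left_le hm
    have _m2 : m.unpair.2 < n + 5 := lt_of_le_of_lt m.unpair_right_le hm
    match n.bodd, n.div2.bodd with
    | false, false => .pair (OCode.ofNat m.unpair.1) (OCode.ofNat m.unpair.2)
    | false, true  => .comp (OCode.ofNat m.unpair.1) (OCode.ofNat m.unpair.2)
    | true , false => .prec (OCode.ofNat m.unpair.1) (OCode.ofNat m.unpair.2)
    | true , true  => .rfind' (OCode.ofNat m)
  decreasing_by all_goals (simp only [m] at *; omega)

/-- Evaluation of an oracle code relative to the oracle `O`, mirroring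
`Nat.Partrec.Code.eval`. -/
def OCode.eval (O : ℕ →. ℕ) : OCode → ℕ →. ℕ
  | .zero => pure 0
  | .succ => fun n => Part.some (n + 1)
  | .left => fun n => Part.some (Nat.unpair n).1
  | .right => fun n => Part.some (Nat.unpair n).2
  | .oracle => O
  | .pair cf cg => fun n => Nat.pair <$> OCode.eval O cf n <*> OCode.eval O cg n
  | .comp cf cg => fun n => OCode.eval O cg n >>= OCode.eval O cf
  | .prec cf cg =>
    Nat.unpaired fun a n =>
      n.rec (OCode.eval O cf a) fun y IH => do
        let i ← IH
        OCode.eval O cg (Nat.pair a (Nat.pair y i))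
  | .rfind' cf =>
    Nat.unpaired fun a m =>
      (Nat.rfind fun n =>
        (fun x => x = 0) <$> OCode.eval O cf (Nat.pair a (n + m))).map (· + m)

open Classical in
/-- The characteristic function of a set of naturals, as a partial function. -/
noncomputable def chi (A : Set ℕ) : ℕ →. ℕ :=
  fun n => Part.some (if n ∈ A then 1 else 0)

/-- `A` is Turing reducible to `B`: the characteristic function of `A` is
computable relative to the characteristic function of `B`. -/
def TuringLE (A B : Set ℕ) : Prop :=
  ∃ c : OCode, OCode.eval (chi B) c = chi A

/-- The Turing jump of `A`: the halting problem relative to `A`. -/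
def jump (A : Set ℕ) : Set ℕ :=
  {e : ℕ | (OCode.eval (chi A) (OCode.ofNat e) e).Dom}


namespace KB

/-- Encoding of `OCode`, inverse to `OCode.ofNat`. -/
def enc : OCode → ℕ
  | .zero => 0
  | .succ => 1
  | .left => 2
  | .right => 3
  | .oracle => 4
  | .pair cf cg => 2 * (2 * Nat.pair (enc cf) (enc cg)) + 5
  | .comp cf cg => 2 * (2 * Nat.pair (enc cf) (enc cg) + 1) + 5
  | .prec cf cg => (2 * (2 * Nat.pair (enc cf) (enc cg)) + 1) + 5
  | .rfind' cf => (2 * (2 * enc cf + 1) + 1) + 5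

theorem ofNat_enc : ∀ c : OCode, OCode.ofNat (enc c) = c := by
  intro c; induction c <;> simp [enc, OCode.ofNat, Nat.div2_val, *]

/-- Translation of plain codes into oracle codes. -/
def tr : Nat.Partrec.Code → OCode
  | .zero => .zero
  | .succ => .succ
  | .left => .left
  | .right => .right
  | .pair cf cg => .pair (tr cf) (tr cg)
  | .comp cf cg => .comp (tr cf) (tr cg)
  | .prec cf cg => .prec (tr cf) (tr cg)
  | .rfind' cf => .rfind' (tr cf)

theorem eval_tr (O : ℕ →. ℕ) : ∀ c : Nat.Partrec.Code,
    OCode.eval O (tr c) = c.eval := by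
  intro c; induction c <;> funext n <;>
    simp [tr, OCode.eval, Nat.Partrec.Code.eval, Part.eq_some_iff, *]

theorem exists_ocode {f : ℕ →. ℕ} (hf : Nat.Partrec f) :
    ∃ c : OCode, ∀ O : ℕ →. ℕ, OCode.eval O c = f := by
  obtain ⟨c, hc⟩ := Nat.Partrec.Code.exists_code.1 hf
  exact ⟨tr c, fun O => (eval_tr O c).trans hc⟩

/-- Constant codes. -/
def cconst : ℕ → OCode
  | 0 => .zero
  | n + 1 => .comp .succ (cconst n)

theorem eval_cconst (O : ℕ →. ℕ) : ∀ n m : ℕ, OCode.eval O (cconst n) m = Part.some n := by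
  intro n; induction n with
  | zero => intro m; rfl
  | succ n ih => intro m; simp [cconst, OCode.eval, ih]

theorem enc_cconst (n : ℕ) :
    enc (cconst n) = Nat.rec (motive := fun _ => ℕ) 0
      (fun _ ih => 2 * (2 * Nat.pair 1 ih + 1) + 5) n := by
  induction n with
  | zero => rfl
  | succ n ih => simp [cconst, enc, ih]

section Tree

variable (χ : List Bool → Bool)

/-- `σ` has extensions of every length with `χ = true`. -/
def Grows (σ : List Bool) : Prop :=
  ∀ n : ℕ, ∃ ρ : List Bool, ρ.length = n ∧ χ (σ ++ ρ) = true

variable {χ}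

theorem Grows.mem {σ : List Bool} (h : Grows χ σ) : χ σ = true := by
  obtain ⟨ρ, hρ, hχ⟩ := h 0
  rw [List.length_eq_zero_iff] at hρ
  simpa [hρ] using hχ

variable (hχtree : ∀ σ, χ σ = true → ∀ τ : List Bool, τ <+: σ → χ τ = true)
include hχtree

theorem Grows.step {σ : List Bool} (h : Grows χ σ) :
    Grows χ (σ ++ [false]) ∨ Grows χ (σ ++ [true]) := by
  by_contra hc
  push_neg at hc
  obtain ⟨h0, h1⟩ := hc
  simp only [Grows, not_forall] at h0 h1
  obtain ⟨n0, hn0⟩ := h0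
  obtain ⟨n1, hn1⟩ := h1
  push_neg at hn0 hn1
  obtain ⟨ρ, hρlen, hρ⟩ := h (max n0 n1 + 1)
  rcases ρ with _ | ⟨b, ρ'⟩
  · simp at hρlen
  have hlen' : ρ'.length = max n0 n1 := by simpa using hρlen
  have key : ∀ m : ℕ, m ≤ max n0 n1 →
      χ ((σ ++ [b]) ++ ρ'.take m) = true ∧ (ρ'.take m).length = m := by
    intro m hm
    constructor
    · apply hχtree _ hρ
      refine ⟨ρ'.drop m, ?_⟩
      simp [List.append_assoc]
    · simp [hlen', hm]
  cases b
  · obtain ⟨hk1, hk2⟩ := key n0 (le_max_left _ _)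
    exact absurd hk1 (by simpa using hn0 (ρ'.take n0) hk2)
  · obtain ⟨hk1, hk2⟩ := key n1 (le_max_right _ _)
    exact absurd hk1 (by simpa using hn1 (ρ'.take n1) hk2)

end Tree

open Classical in
/-- The next bit of the leftmost growing path. -/
noncomputable def nb (χ : List Bool → Bool) (σ : List Bool) : Bool :=
  if Grows χ (σ ++ [false]) then false else true

/-- The leftmost growing path (as finite initial segments). -/
noncomputable def pa (χ : List Bool → Bool) : ℕ → List Bool
  | 0 => []
  | k + 1 => pa χ k ++ [nb χ (pa χ k)]

theorem pa_length (χ : List Bool → Bool) : ∀ k, (pa χ k).length = k := by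
  intro k; induction k with
  | zero => rfl
  | succ k ih => simp [pa, ih]

theorem pa_grows {χ : List Bool → Bool}
    (hχtree : ∀ σ, χ σ = true → ∀ τ : List Bool, τ <+: σ → χ τ = true)
    (hnil : Grows χ []) : ∀ k, Grows χ (pa χ k) := by
  intro k; induction k with
  | zero => exact hnil
  | succ k ih =>
      show Grows χ (pa χ k ++ [nb χ (pa χ k)])
      rcases ih.step hχtree with h | h
      · rwa [nb, if_pos h]
      · by_cases h0 : Grows χ (pa χ k ++ [false])
        · rwa [nb, if_pos h0]
        · rwa [nb, if_neg h0]

theorem pa_eq_ofFn (χ : List Bool → Bool) :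
    ∀ k, pa χ k = List.ofFn (fun i : Fin k => nb χ (pa χ i)) := by
  intro k; induction k with
  | zero => rfl
  | succ k ih =>
      rw [List.ofFn_succ']
      show pa χ k ++ [nb χ (pa χ k)] = _
      simp [List.concat_eq_append, ← ih]

/-- Decode a natural number as a list of booleans. -/
def dec (s : ℕ) : List Bool := ((Encodable.decode s : Option (List Bool)).getD [])

theorem dec_encode (l : List Bool) : dec (Encodable.encode l) = l := by
  simp [dec, Encodable.encodek]

/-- A bound on the codes of boolean lists of a given length. -/
def ebound : ℕ → ℕ
  | 0 => 0
  | n + 1 => (ebound n + 2) * (ebound n + 2)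

theorem encode_le_ebound : ∀ l : List Bool, Encodable.encode l ≤ ebound l.length := by
  intro l; induction l with
  | nil => simp [Encodable.encode_list_nil, ebound]
  | cons b l ih =>
      have h1 : Encodable.encode (b :: l) =
          Nat.pair (Encodable.encode b) (Encodable.encode l) + 1 :=
        Encodable.encode_list_cons b l
      have h2 : Nat.pair (Encodable.encode b) (Encodable.encode l) <
          (max (Encodable.encode b) (Encodable.encode l) + 1) ^ 2 :=
        Nat.pair_lt_max_add_one_sq _ _
      have hb : Encodable.encode b ≤ 1 := by cases b <;> simp [Encodable.encode_true, Encodable.encode_false]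
      have h3 : max (Encodable.encode b) (Encodable.encode l) + 1 ≤ ebound l.length + 2 := by
        have := max_le (hb.trans (by omega : (1:ℕ) ≤ ebound l.length + 1))
          (ih.trans (Nat.le_succ _))
        omega
    
      calc Encodable.encode (b :: l) ≤ (max (Encodable.encode b) (Encodable.encode l) + 1) ^ 2 := by omega
        _ ≤ (ebound l.length + 2) ^ 2 := Nat.pow_le_pow_left h3 2
        _ = ebound (b :: l).length := by simp [ebound]; ring

/-- Bounded search: is there `k < m` coding a list of length `n` whose
append to `dec s` satisfies `χ`? -/
def anyB (χ : List Bool → Bool) (s n : ℕ) : ℕ → Bool :=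
  Nat.rec false fun k ih => ih || (decide ((dec k).length = n) && χ (dec s ++ dec k))

theorem anyB_iff (χ : List Bool → Bool) (s n : ℕ) : ∀ m : ℕ,
    anyB χ s n m = true ↔ ∃ k < m, (dec k).length = n ∧ χ (dec s ++ dec k) = true := by
  intro m; induction m with
  | zero => simp [anyB]
  | succ m ih =>
      show (anyB χ s n m || _) = true ↔ _
      rw [Bool.or_eq_true, ih]
      constructor
      · rintro (⟨k, hk, h⟩ | h)
        · exact ⟨k, by omega, h⟩
        · simp only [Bool.and_eq_true, decide_eq_true_eq] at h
          exact ⟨m, by omega, h⟩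
      · rintro ⟨k, hk, h1, h2⟩
        rcases Nat.lt_succ_iff_lt_or_eq.1 hk with hk' | rfl
        · exact Or.inl ⟨k, hk', h1, h2⟩
        · exact Or.inr (by simp [h1, h2])

/-- Decidable test for the existence of an extension of a given length. -/
def FB (χ : List Bool → Bool) (s n : ℕ) : Bool := anyB χ s n (ebound n + 1)

theorem FB_iff (χ : List Bool → Bool) (s n : ℕ) :
    FB χ s n = true ↔ ∃ ρ : List Bool, ρ.length = n ∧ χ (dec s ++ ρ) = true := by
  rw [FB, anyB_iff]
  constructor
  · rintro ⟨k, _, h1, h2⟩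
    exact ⟨dec k, h1, h2⟩
  · rintro ⟨ρ, h1, h2⟩
    refine ⟨Encodable.encode ρ, ?_, ?_, ?_⟩
    · have := encode_le_ebound ρ; rw [h1] at this; omega
    · rw [dec_encode, h1]
    · rwa [dec_encode]

theorem grows_iff_FB (χ : List Bool → Bool) (σ : List Bool) :
    Grows χ σ ↔ ∀ n, FB χ (Encodable.encode σ) n = true := by
  unfold Grows
  simp only [FB_iff, dec_encode]

theorem computable_dec : Computable dec :=
  Computable.option_getD Computable.decode (Computable.const [])

theorem primrec_ebound : Primrec ebound := by
  have h : Primrec (Nat.rec (motive := fun _ => ℕ) 0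
      (fun _ ih => (ih + 2) * (ih + 2))) := by
    apply Primrec.nat_rec₁
    exact Primrec.nat_mul.comp₂
      (Primrec.nat_add.comp₂ Primrec₂.right (Primrec₂.const 2))
      (Primrec.nat_add.comp₂ Primrec₂.right (Primrec₂.const 2))
  apply h.of_eq
  intro n; induction n with
  | zero => rfl
  | succ n ih => simp [ebound, ← ih]

theorem computable_FB {χ : List Bool → Bool} (hχ : Computable χ) :
    Computable fun p : ℕ × ℕ => FB χ p.1 p.2 := by
  have hdec : Computable dec := computable_dec
  have hstep : Computable fun p : (ℕ × ℕ) × ℕ × Bool =>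
      (p.2.2 || (decide ((dec p.2.1).length = p.1.2) && χ (dec p.1.1 ++ dec p.2.1))) := by
    have h1 : Computable fun p : (ℕ × ℕ) × ℕ × Bool => (dec p.2.1).length :=
      Computable.list_length.comp (hdec.comp (Computable.fst.comp Computable.snd))
    have h2 : Computable fun p : (ℕ × ℕ) × ℕ × Bool => p.1.2 :=
      Computable.snd.comp Computable.fst
    have heq : Computable fun p : (ℕ × ℕ) × ℕ × Bool =>
        decide ((dec p.2.1).length = p.1.2) :=
      ((Primrec.eq (α := ℕ)).decide.to_comp).comp h1 h2
    have hχ2 : Computable fun p : (ℕ × ℕ) × ℕ × Bool => χ (dec p.1.1 ++ dec p.2.1) :=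
      hχ.comp (Computable.list_append.comp
        (hdec.comp (Computable.fst.comp Computable.fst))
        (hdec.comp (Computable.fst.comp Computable.snd)))
    have hand : Computable fun p : (ℕ × ℕ) × ℕ × Bool =>
        (decide ((dec p.2.1).length = p.1.2) && χ (dec p.1.1 ++ dec p.2.1)) :=
      ((Primrec.dom_bool₂ (· && ·)).to_comp).comp heq hχ2
    exact ((Primrec.dom_bool₂ (· || ·)).to_comp).comp
      (Computable.snd.comp Computable.snd) hand
  have := Computable.nat_rec
    (f := fun p : ℕ × ℕ => ebound p.2 + 1)
    (g := fun _ : ℕ × ℕ => false)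
    (h := fun (p : ℕ × ℕ) (q : ℕ × Bool) =>
      (q.2 || (decide ((dec q.1).length = p.2) && χ (dec p.1 ++ dec q.1))))
    (Computable.succ.comp (primrec_ebound.to_comp.comp Computable.snd))
    (Computable.const false) hstep.to₂
  apply this.of_eq
  intro p
  show Nat.rec (motive := fun _ => Bool) false
      (fun y IH => IH || (decide ((dec y).length = p.2) && χ (dec p.1 ++ dec y)))
      (ebound p.2 + 1) = FB χ p.1 p.2
  rw [FB]
  suffices h : ∀ m, Nat.rec (motive := fun _ => Bool) false
      (fun y IH => IH || (decide ((dec y).length = p.2) && χ (dec p.1 ++ dec y))) m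
      = anyB χ p.1 p.2 m from h (ebound p.2 + 1)
  intro m
  induction m with
  | zero => rfl
  | succ m ih => simp [anyB, ← ih]

/-- The Σ⁰₁ search function: halts iff some length has no extension. -/
def hpart (χ : List Bool → Bool) : ℕ →. ℕ :=
  fun s => Nat.rfind fun n => Part.some (!FB χ s n)

theorem hpart_partrec {χ : List Bool → Bool} (hχ : Computable χ) :
    Nat.Partrec (hpart χ) := by
  rw [← Partrec.nat_iff]
  have h : Computable fun p : ℕ × ℕ => !FB χ p.1 p.2 :=
    ((Primrec.dom_bool (!·)).to_comp).comp (computable_FB hχ)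
  exact Partrec.rfind h.to₂.partrec₂

theorem hpart_dom_iff {χ : List Bool → Bool} (σ : List Bool) :
    (hpart χ (Encodable.encode σ)).Dom ↔ ¬ Grows χ σ := by
  rw [hpart]
  refine Nat.rfind_dom.trans ?_
  rw [grows_iff_FB]
  constructor
  · rintro ⟨n, hn, -⟩ hall
    have := hall n
    simp only [Part.mem_some_iff] at hn
    simp [this] at hn
  · intro h
    push_neg at h
    obtain ⟨n, hn⟩ := h
    refine ⟨n, ?_, fun {m} _ => trivial⟩
    simp [Part.mem_some_iff, hn]

/-- Numeric form of `enc ∘ cconst`. -/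
def encC : ℕ → ℕ := fun n => enc (cconst n)

theorem primrec_encC : Primrec encC := by
  have h : Primrec (Nat.rec (motive := fun _ => ℕ) 0
      (fun _ ih => 2 * (2 * Nat.pair 1 ih + 1) + 5)) := by
    apply Primrec.nat_rec₁
    apply Primrec.nat_add.comp₂
    · apply Primrec.nat_mul.comp₂ (Primrec₂.const 2)
      apply Primrec.nat_add.comp₂ _ (Primrec₂.const 1)
      apply Primrec.nat_mul.comp₂ (Primrec₂.const 2)
      exact Primrec₂.natPair.comp₂ (Primrec₂.const 1) Primrec₂.right
    · exact Primrec₂.const 5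
  apply h.of_eq
  intro n
  rw [encC, enc_cconst]

theorem primrec_dec : Primrec dec :=
  Primrec.option_getD.comp Primrec.decode (Primrec.const [])

section Machine

variable (ch : OCode)

/-- Index of the machine `comp ch (cconst s)`. -/
def efun (s : ℕ) : ℕ := 2 * (2 * Nat.pair (enc ch) (encC s) + 1) + 5

/-- The oracle query made on (the code of) a list `σ`: the index asking whether
`σ ++ [false]` has only finitely many extensions. -/
def qfun (s : ℕ) : ℕ := efun ch (Encodable.encode (dec s ++ [false]))

/-- Extend the list coded by the first component by the bit given by the oracle
answer in the second component. -/
def stfun (p : ℕ) : ℕ := Encodable.encode (dec p.unpair.1 ++ [!(p.unpair.2 == 0)])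

/-- Extract the `n`-th bit of the coded list, as `0` or `1`. -/
def finfun (p : ℕ) : ℕ := cond ((dec p.unpair.2).getD p.unpair.1 false) 1 0

theorem primrec_efun : Primrec (efun ch) := by
  apply Primrec.nat_add.comp _ (Primrec.const 5)
  apply Primrec.nat_mul.comp (Primrec.const 2)
  apply Primrec.nat_add.comp _ (Primrec.const 1)
  apply Primrec.nat_mul.comp (Primrec.const 2)
  exact Primrec₂.natPair.comp (Primrec.const (enc ch)) primrec_encC

theorem primrec_qfun : Primrec (qfun ch) := by
  apply (primrec_efun ch).comp
  apply Primrec.encode.comp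
  exact Primrec.list_concat.comp primrec_dec (Primrec.const false)

theorem primrec_stfun : Primrec stfun := by
  apply Primrec.encode.comp
  apply Primrec.list_concat.comp (primrec_dec.comp (Primrec.fst.comp Primrec.unpair))
  exact (Primrec.dom_bool (!·)).comp
    (Primrec.beq.comp (Primrec.snd.comp Primrec.unpair) (Primrec.const 0))

theorem primrec_finfun : Primrec finfun := by
  apply Primrec.cond _ (Primrec.const 1) (Primrec.const 0)
  exact (Primrec.list_getD false).comp (primrec_dec.comp (Primrec.snd.comp Primrec.unpair))
    (Primrec.fst.comp Primrec.unpair)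

theorem efun_enc (s : ℕ) : efun ch s = enc (OCode.comp ch (cconst s)) := by
  simp [efun, enc, encC]

theorem efun_jump {χ : List Bool → Bool}
    (hch : ∀ O : ℕ →. ℕ, OCode.eval O ch = hpart χ) (s : ℕ) :
    efun ch s ∈ jump ∅ ↔ (hpart χ s).Dom := by
  show (OCode.eval (chi ∅) (OCode.ofNat (efun ch s)) (efun ch s)).Dom ↔ _
  rw [efun_enc, ofNat_enc]
  simp [OCode.eval, eval_cconst, hch]
  exact (congrArg Part.Dom (Part.bind_some s (hpart χ))).to_iff

end Machine


theorem exists_ocode_tot {g : ℕ → ℕ} (hg : Computable g) :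
    ∃ c : OCode, ∀ O : ℕ →. ℕ, OCode.eval O c = fun n => Part.some (g n) := by
  have : Nat.Partrec fun n => Part.some (g n) := Partrec.nat_iff.1 hg
  exact exists_ocode this

theorem getD_concat (σ : List Bool) (b : Bool) (d : Bool) :
    (σ ++ [b]).getD σ.length d = b := by
  simp [List.getD, List.getElem?_concat_length]

section EvalLemmas

variable {O : ℕ →. ℕ} {cf cg : OCode} {n a b : ℕ}

theorem eval_comp_some (h : OCode.eval O cg n = Part.some a) :
    OCode.eval O (.comp cf cg) n = OCode.eval O cf a := by
  show OCode.eval O cg n >>= OCode.eval O cf = _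
  rw [h]
  exact Part.bind_some a (OCode.eval O cf)

theorem eval_pair_some (h1 : OCode.eval O cf n = Part.some a)
    (h2 : OCode.eval O cg n = Part.some b) :
    OCode.eval O (.pair cf cg) n = Part.some (Nat.pair a b) := by
  show Nat.pair <$> OCode.eval O cf n <*> OCode.eval O cg n = _
  rw [h1, h2]
  simp [Seq.seq]

theorem eval_prec_zero : OCode.eval O (.prec cf cg) (Nat.pair a 0) = OCode.eval O cf a := by
  simp [OCode.eval, Nat.unpaired]

theorem eval_prec_succ {k : ℕ} :
    OCode.eval O (.prec cf cg) (Nat.pair a (k + 1)) =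
      OCode.eval O (.prec cf cg) (Nat.pair a k) >>= fun i =>
        OCode.eval O cg (Nat.pair a (Nat.pair k i)) := by
  simp [OCode.eval, Nat.unpaired]

theorem eval_zero' : OCode.eval O .zero n = Part.some 0 := rfl

theorem eval_succ' : OCode.eval O .succ n = Part.some (n + 1) := rfl

theorem eval_right' : OCode.eval O .right n = Part.some n.unpair.2 := rfl

theorem eval_oracle' : OCode.eval O .oracle = O := rfl

end EvalLemmas

end KB

/-- **The Kreisel Basis Theorem.** Every nonempty Π⁰₁ class (the set of paths
through an infinite recursive subtree of `2^{<ℕ}`) contains a member `A`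
with `A ≤_T ∅'`: the sets Turing reducible to the halting problem form a
basis for nonempty Π⁰₁ classes. -/
theorem kreisel_basis_theorem (T : Set (List Bool))
    (htree : ∀ σ ∈ T, ∀ τ : List Bool, τ <+: σ → τ ∈ T)
    (hrec : ComputablePred (· ∈ T))
    (hinf : T.Infinite) :
    ∃ f : ℕ → Bool, (∀ k : ℕ, (List.ofFn fun i : Fin k => f i) ∈ T) ∧
      TuringLE {n : ℕ | f n = true} (jump ∅) := open KB in by
  obtain ⟨inst, hχ⟩ := hrec
  set χ : List Bool → Bool := fun τ => decide (τ ∈ T) with hχdef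
  have hT : ∀ τ : List Bool, τ ∈ T ↔ χ τ = true := fun τ => by simp [hχdef]
  have hχtree : ∀ σ, χ σ = true → ∀ τ : List Bool, τ <+: σ → χ τ = true := by
    intro σ hσ τ hpre
    exact (hT τ).1 (htree σ ((hT σ).2 hσ) τ hpre)
  have hnil : Grows χ [] := by
    intro n
    have hex : ∃ τ ∈ T, n ≤ τ.length := by
      by_contra hcon
      push_neg at hcon
      exact hinf ((List.finite_length_lt Bool n).subset fun τ hτ => hcon τ hτ)
    obtain ⟨τ, hτ, hn⟩ := hex
    refine ⟨τ.take n, by simp [hn], ?_⟩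
    simpa using (hT _).1 (htree τ hτ _ (List.take_prefix n τ))
  have hgrow : ∀ k, Grows χ (pa χ k) := pa_grows hχtree hnil
  refine ⟨fun n => nb χ (pa χ n), ?_, ?_⟩
  · intro k
    rw [← pa_eq_ofFn]
    exact (hT _).2 (hgrow k).mem
  -- the Turing reduction
  obtain ⟨ch, hch⟩ := exists_ocode (hpart_partrec hχ)
  obtain ⟨cid, hid⟩ := exists_ocode_tot Computable.id
  obtain ⟨cq, hq⟩ := exists_ocode_tot (primrec_qfun ch).to_comp
  obtain ⟨cst, hst⟩ := exists_ocode_tot primrec_stfun.to_comp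
  obtain ⟨cfin, hfin⟩ := exists_ocode_tot primrec_finfun.to_comp
  set B : ℕ →. ℕ := chi (jump ∅) with hBdef
  set cG : OCode := .comp cst (.pair cid (.comp .oracle cq)) with hcG
  have hGval : ∀ k, OCode.eval B cG (Encodable.encode (pa χ k)) =
      Part.some (Encodable.encode (pa χ (k + 1))) := by
    intro k
    set s := Encodable.encode (pa χ k) with hs
    have hdecs : dec s = pa χ k := dec_encode _
    have hqs : qfun ch s ∈ jump ∅ ↔ ¬ Grows χ (pa χ k ++ [false]) := by
      rw [qfun, efun_jump ch hch, hdecs, hpart_dom_iff]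
    have hpa1 : pa χ (k + 1) = pa χ k ++ [nb χ (pa χ k)] := rfl
    by_cases hg : Grows χ (pa χ k ++ [false])
    · have hq0 : qfun ch s ∉ jump ∅ := fun hmem => (hqs.1 hmem) hg
      have hBq : B (qfun ch s) = Part.some 0 := by
        show chi (jump ∅) (qfun ch s) = _
        unfold chi
        rw [if_neg hq0]
      have h1 : OCode.eval B (.comp .oracle cq) s = Part.some 0 := by
        rw [eval_comp_some (by rw [hq]), eval_oracle', hBq]
      have h2 : OCode.eval B (.pair cid (.comp .oracle cq)) s =
          Part.some (Nat.pair s 0) := eval_pair_some (by simp [hid]) h1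
      rw [hcG, eval_comp_some h2, hst]
      have hnb : nb χ (pa χ k) = false := by rw [nb, if_pos hg]
      simp [stfun, Nat.unpair_pair, hdecs, hpa1, hnb]
    · have hq1 : qfun ch s ∈ jump ∅ := hqs.2 hg
      have hBq : B (qfun ch s) = Part.some 1 := by
        show chi (jump ∅) (qfun ch s) = _
        unfold chi
        rw [if_pos hq1]
      have h1 : OCode.eval B (.comp .oracle cq) s = Part.some 1 := by
        rw [eval_comp_some (by rw [hq]), eval_oracle', hBq]
      have h2 : OCode.eval B (.pair cid (.comp .oracle cq)) s =
          Part.some (Nat.pair s 1) := eval_pair_some (by simp [hid]) h1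
      rw [hcG, eval_comp_some h2, hst]
      have hnb : nb χ (pa χ k) = true := by rw [nb, if_neg hg]
      simp [stfun, Nat.unpair_pair, hdecs, hpa1, hnb]
  set cit : OCode := .prec (cconst (Encodable.encode ([] : List Bool)))
      (.comp cG (.comp .right .right)) with hcit
  have hit : ∀ k, OCode.eval B cit (Nat.pair 0 k) =
      Part.some (Encodable.encode (pa χ k)) := by
    intro k
    induction k with
    | zero =>
        rw [hcit, eval_prec_zero, eval_cconst]
        rfl
    | succ k ih =>
        rw [hcit] at ih ⊢
        rw [eval_prec_succ, ih, Part.bind_eq_bind, Part.bind_some]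
        have h1 : OCode.eval B (.comp .right .right)
            (Nat.pair 0 (Nat.pair k (Encodable.encode (pa χ k)))) =
            Part.some (Encodable.encode (pa χ k)) := by
          rw [eval_comp_some (by rw [eval_right']), eval_right', Nat.unpair_pair,
            Nat.unpair_pair]
        rw [eval_comp_some h1, hGval]
  refine ⟨.comp cfin (.pair cid (.comp cit (.pair .zero .succ))), ?_⟩
  funext n
  have h2 : OCode.eval B (.pair (.zero) (.succ)) n = Part.some (Nat.pair 0 (n + 1)) :=
    eval_pair_some eval_zero' eval_succ'
  have h3 : OCode.eval B (.comp cit (.pair .zero .succ)) n =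
      Part.some (Encodable.encode (pa χ (n + 1))) := by
    rw [eval_comp_some h2, hit]
  have h4 : OCode.eval B (.pair cid (.comp cit (.pair .zero .succ))) n =
      Part.some (Nat.pair n (Encodable.encode (pa χ (n + 1)))) :=
    eval_pair_some (by simp [hid]) h3
  rw [eval_comp_some h4, hfin]
  show Part.some (finfun (Nat.pair n (Encodable.encode (pa χ (n + 1))))) = _
  have h5 : finfun (Nat.pair n (Encodable.encode (pa χ (n + 1)))) =
      cond (nb χ (pa χ n)) 1 0 := by
    have h6 := getD_concat (pa χ n) (nb χ (pa χ n)) false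
    rw [pa_length] at h6
    show cond ((dec (Nat.pair n (Encodable.encode (pa χ (n+1)))).unpair.2).getD
      (Nat.pair n (Encodable.encode (pa χ (n+1)))).unpair.1 false) 1 0 = _
    rw [Nat.unpair_pair]
    show cond ((dec (Encodable.encode (pa χ (n+1)))).getD n false) 1 0 = _
    rw [dec_encode]
    show cond ((pa χ n ++ [nb χ (pa χ n)]).getD n false) 1 0 = _
    rw [h6]
  rw [h5]
  show _ = chi {m : ℕ | nb χ (pa χ m) = true} n
  unfold chi
  simp only [Set.mem_setOf_eq]
  rcases Bool.eq_false_or_eq_true (nb χ (pa χ n)) with hb | hb <;> simp [hb]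
end

section
/- Every uncountable Borel subset of a Polish space contains a nonempty perfect subset; consequently every Borel set is either countable or has the cardinality of the continuum (Perfect Set Theorem for Borel sets). -/
open Cardinal MeasureTheory

/-!
A Borel set becomes clopen in a finer Polish topology, so the perfect set theorem for closed sets
yields a continuous injection of the Cantor space into it, for the finer and hence for the original
topology. Its range is compact, hence closed, and has no isolated points because the Cantor space
has none and continuous injections preserve accumulation points. The bound `#X ≤ 𝔠` comes from a
countable family of Borel sets separating points.
-/

section

open Filter Function Set Topology

instance Pi.perfectSpace {ι : Type*} [Infinite ι] {α : ι → Type*}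
    [∀ i, TopologicalSpace (α i)] [∀ i, Nontrivial (α i)] : PerfectSpace (∀ i, α i) := by
  classical
  refine ⟨fun x _ => accPt_iff_frequently.2 ?_⟩
  choose y hy using fun i => exists_ne (x i)
  have hlim : Tendsto (fun i => update x i (y i)) cofinite (𝓝 x) :=
    tendsto_pi_nhds.2 fun j => tendsto_const_nhds.congr' <|
      (eventually_cofinite_ne j).mono fun i hij => (update_of_ne hij.symm _ _).symm
  refine hlim.frequently (Frequently.of_forall fun i => ⟨fun h => hy i ?_, mem_univ _⟩)
  simpa using congr_fun h i

theorem Preperfect.image {X Y : Type*} [TopologicalSpace X] [TopologicalSpace Y] {C : Set X}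
    (hC : Preperfect C) {f : X → Y} (hf : Continuous f) (hinj : Injective f) :
    Preperfect (f '' C) := by
  rintro _ ⟨x, hx, rfl⟩
  simpa only [map_principal] using (hC x hx).map hf.continuousAt hinj

theorem perfect_range_of_continuous_injective {X Y : Type*} [TopologicalSpace X]
    [CompactSpace X] [PerfectSpace X] [TopologicalSpace Y] [T2Space Y] {f : X → Y}
    (hf : Continuous f) (hinj : Injective f) : Perfect (range f) := by
  refine ⟨(isCompact_range hf).isClosed, ?_⟩
  simpa only [image_univ] using PerfectSpace.univ_preperfect.image hf hinj

theorem MeasurableSpace.mk_le_continuum_of_countablySeparated (X : Type*) [MeasurableSpace X]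
    [MeasurableSpace.CountablySeparated X] : #X ≤ 𝔠 := by
  obtain ⟨f, -, hf⟩ := MeasurableSpace.measurable_injection_nat_bool_of_countablySeparated X
  simpa using lift_mk_le_lift_mk_of_injective hf

theorem continuum_le_mk_of_nat_bool_injection {X : Type*} {A : Set X} {f : (ℕ → Bool) → X}
    (hfA : range f ⊆ A) (hinj : Injective f) : 𝔠 ≤ #A := by
  simpa using lift_mk_le_lift_mk_of_injective
    (f := codRestrict f A fun x => hfA ⟨x, rfl⟩) (hinj.codRestrict _)

theorem MeasurableSet.exists_nat_bool_injection_of_not_countable {X : Type*}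
    [TopologicalSpace X] [PolishSpace X] [MeasurableSpace X] [BorelSpace X] {A : Set X}
    (hA : MeasurableSet A) (hunc : ¬A.Countable) :
    ∃ f : (ℕ → Bool) → X, range f ⊆ A ∧ Continuous f ∧ Injective f := by
  obtain ⟨t, hle, _, hAclosed, -⟩ := hA.isClopenable
  obtain ⟨f, hfA, hf, hinj⟩ :=
    @IsClosed.exists_nat_bool_injection_of_not_countable X t _ A hAclosed hunc
  exact ⟨f, hfA, continuous_le_rng hle hf, hinj⟩

end

/-- **Perfect Set Theorem for Borel sets.** Every uncountable Borel subset of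
a Polish space contains a nonempty perfect subset; consequently every Borel
set is either countable or has the cardinality of the continuum. -/
theorem perfect_set_theorem_borel {X : Type*} [TopologicalSpace X]
    [PolishSpace X] (A : Set X) (hA : MeasurableSet[borel X] A) :
    (¬ A.Countable → ∃ P : Set X, Perfect P ∧ P.Nonempty ∧ P ⊆ A) ∧
    (A.Countable ∨ Cardinal.mk A = Cardinal.continuum) := by
  borelize X
  by_cases hc : A.Countable
  · exact ⟨fun h => absurd hc h, Or.inl hc⟩
  obtain ⟨f, hfA, hf, hinj⟩ := hA.exists_nat_bool_injection_of_not_countable hc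
  have hX : #X ≤ 𝔠 := MeasurableSpace.mk_le_continuum_of_countablySeparated X
  refine ⟨fun _ => ⟨Set.range f, perfect_range_of_continuous_injective hf hinj,
    Set.range_nonempty f, hfA⟩, Or.inr ?_⟩
  exact le_antisymm ((mk_set_le A).trans hX) (continuum_le_mk_of_nat_bool_injection hfA hinj)
end
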